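/- Let γ: X → 𝒫ω(𝒜×X) and δ: Y → 𝒫ω(𝒜×Y) be finitely branching LTSs over a finite action set 𝒜. Define posets Tₙ by: T₀ = 𝒫ω(1) ordered by inclusion, and Tₙ₊₁ = the set of finite down-closed subsets of 𝒜×Tₙ (with the product order of the discrete order on 𝒜 and the order on Tₙ), ordered by inclusion. Define tₙ: X → Tₙ by t₀(x) = {∗} and tₙ₊₁(x) = ↓{(σ, tₙ(y)) | (σ,y) ∈ γ(x)} (the downclosure), and similarly sₙ: Y → Tₙ for δ. Define 'y simulates x up to depth n' recursively: every y simulates every x up to depth 0, and y simulates x up to depth n+1 if for every (σ,x') ∈ γ(x) there is (σ,y') ∈ δ(y) such that y' simulates x' up to depth n. Then for all n, x ∈ X and y ∈ Y: y simulates x up to depth n if and only if tᵢ(x) ≤ sᵢ(y) in Tᵢ for all i ≤ n. -/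
import Mathlib


universe u v

/-- The posets `Tₙ` for the graded semantics of simulation: `T₀ = 𝒫ω(1)` ordered by
inclusion, and `Tₙ₊₁` is the set of finite down-closed subsets of `𝒜 × Tₙ` (product
of the discrete order on `𝒜` with the order on `Tₙ`), ordered by inclusion.
We package the carrier together with its order relation. -/
@[reducible] def SimData (A : Type u) : (n : ℕ) → (α : Type u) × (α → α → Prop)
  | 0 => ⟨Set PUnit, fun s t => s ⊆ t⟩
  | n + 1 =>
      let p := SimData A n
      ⟨{S : Set (A × p.1) // S.Finite ∧
          ∀ q ∈ S, ∀ q' : A × p.1, q'.1 = q.1 → p.2 q'.2 q.2 → q' ∈ S},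
        fun s t => s.val ⊆ t.val⟩

theorem simLe_trans {A : Type u} :
    ∀ (n : ℕ) (a b c : (SimData A n).1),
      (SimData A n).2 a b → (SimData A n).2 b c → (SimData A n).2 a c
  | 0, _, _, _, h1, h2 => fun _ hx => h2 (h1 hx)
  | _ + 1, _, _, _, h1, h2 => fun _ hx => h2 (h1 hx)

/-- Principal downsets in `Tₙ` are finite. -/
theorem simDownset_finite {A : Type u} :
    ∀ (n : ℕ) (w : (SimData A n).1), {s : (SimData A n).1 | (SimData A n).2 s w}.Finite
  | 0, _ => Set.toFinite _
  | n + 1, w => by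
      have hw : w.val.Finite := w.2.1
      have h1 : {v : Set (A × (SimData A n).1) | v ⊆ w.val}.Finite :=
        Set.Finite.finite_subsets hw
      exact Set.Finite.preimage
        (f := (Subtype.val : (SimData A (n + 1)).1 → Set (A × (SimData A n).1)))
        Subtype.val_injective.injOn h1

/-- The graded simulation semantics `tₙ : X → Tₙ`:
`t₀(x) = {∗}` and `tₙ₊₁(x) = ↓{(σ, tₙ(y)) | (σ, y) ∈ γ(x)}`. -/
def simT {A : Type u} {X : Type v} (γ : X → Finset (A × X)) :
    (n : ℕ) → X → (SimData A n).1
  | 0, _ => (Set.univ : Set PUnit)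
  | n + 1, x =>
      ⟨{q : A × (SimData A n).1 |
          ∃ p ∈ γ x, q.1 = p.1 ∧ (SimData A n).2 q.2 (simT γ n p.2)},
       by
        constructor
        · apply Set.Finite.subset
            (Set.Finite.biUnion (γ x).finite_toSet
              (fun p _ => (Set.finite_singleton p.1).prod (simDownset_finite n (simT γ n p.2))))
          rintro q ⟨p, hp, h1, h2⟩
          exact Set.mem_biUnion hp ⟨h1, h2⟩
        · rintro q ⟨p, hp, h1, h2⟩ q' he hle
          exact ⟨p, hp, he.trans h1, simLe_trans n _ _ _ hle h2⟩⟩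

/-- `SimUpTo γ δ n x y` : `y` simulates `x` up to depth `n`. -/
def SimUpTo {A : Type u} {X : Type v} {Y : Type v}
    (γ : X → Finset (A × X)) (δ : Y → Finset (A × Y)) : ℕ → X → Y → Prop
  | 0, _, _ => True
  | n + 1, x, y => ∀ p ∈ γ x, ∃ q ∈ δ y, q.1 = p.1 ∧ SimUpTo γ δ n p.2 q.2

theorem simLe_refl {A : Type u} :
    ∀ (n : ℕ) (a : (SimData A n).1), (SimData A n).2 a a
  | 0, _ => fun _ hx => hx
  | _ + 1, _ => fun _ hx => hx

theorem simUpTo_iff {A : Type u} {X Y : Type v}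
    (γ : X → Finset (A × X)) (δ : Y → Finset (A × Y)) :
    ∀ (n : ℕ) (x : X) (y : Y),
      SimUpTo γ δ n x y ↔ (SimData A n).2 (simT γ n x) (simT δ n y)
  | 0, x, y => by
      simp only [SimUpTo, simT]
      exact ⟨fun _ _ h => h, fun _ => trivial⟩
  | n + 1, x, y => by
      constructor
      · rintro h q ⟨p, hp, h1, h2⟩
        obtain ⟨q', hq', he, hs⟩ := h p hp
        exact ⟨q', hq', h1.trans he.symm,
          simLe_trans n _ _ _ h2 ((simUpTo_iff γ δ n p.2 q'.2).mp hs)⟩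
      · intro h p hp
        obtain ⟨q', hq', he, hs⟩ :=
          h (show (p.1, simT γ n p.2) ∈ _ from ⟨p, hp, rfl, simLe_refl n _⟩)
        exact ⟨q', hq', he.symm, (simUpTo_iff γ δ n p.2 q'.2).mpr hs⟩

theorem simUpTo_mono {A : Type u} {X Y : Type v}
    (γ : X → Finset (A × X)) (δ : Y → Finset (A × Y)) :
    ∀ (n : ℕ) (x : X) (y : Y), SimUpTo γ δ (n + 1) x y → SimUpTo γ δ n x y
  | 0, _, _, _ => trivial
  | n + 1, x, y, h => fun p hp => by
      obtain ⟨q, hq, he, hs⟩ := h p hp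
      exact ⟨q, hq, he, simUpTo_mono γ δ n p.2 q.2 hs⟩

theorem simUpTo_of_le {A : Type u} {X Y : Type v}
    (γ : X → Finset (A × X)) (δ : Y → Finset (A × Y)) :
    ∀ (n i : ℕ), i ≤ n → ∀ (x : X) (y : Y), SimUpTo γ δ n x y → SimUpTo γ δ i x y
  | 0, i, hi, _, _, h => by
      interval_cases i; exact h
  | n + 1, i, hi, x, y, h => by
      rcases Nat.lt_or_ge i (n + 1) with hlt | hge
      · exact simUpTo_of_le γ δ n i (Nat.lt_succ_iff.mp hlt) x y (simUpTo_mono γ δ n x y h)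
      · have : i = n + 1 := le_antisymm hi hge
        exact this ▸ h

/-- `y` simulates `x` up to depth `n` iff `tᵢ(x) ≤ sᵢ(y)` in `Tᵢ` for all `i ≤ n`. -/
theorem simUpTo_iff_simT_le {A : Type u} [Fintype A] {X Y : Type v}
    (γ : X → Finset (A × X)) (δ : Y → Finset (A × Y)) (n : ℕ) (x : X) (y : Y) :
    SimUpTo γ δ n x y ↔ ∀ i ≤ n, (SimData A i).2 (simT γ i x) (simT δ i y) := by
  constructor
  · intro h i hi
    apply (simUpTo_iff γ δ i x y).mp
    exact simUpTo_of_le γ δ n i hi x y h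
  · intro h
    exact (simUpTo_iff γ δ n x y).mpr (h n le_rfl)
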